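/- arXiv:2603.19874 — 5 statements merged into one kernel-verified Lean document; each statement's English description precedes it below -/
import Mathlib

section
/- Fix β ≥ 1, a finite label set Y with |Y| = k, and margins f : Y → ℝ. Define F(ν) = ∑_{y∈Y} (max(0, (f(y) + ν)/β + 1))^β. Then F is continuous and monotonically nondecreasing in ν, strictly increasing whenever F(ν) > 0, and there exists a unique ν* with F(ν*) = 1. -/
theorem implicit_normalizer_exists_unique (Y : Type*) [Fintype Y] [Nonempty Y]
    (β : ℝ) (hβ : 1 ≤ β) (f : Y → ℝ)
    (F : ℝ → ℝ) (hF : F = fun ν => ∑ y, (max 0 ((f y + ν) / β + 1)) ^ β) :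
    Continuous F ∧ Monotone F ∧
      (∀ ν ν' : ℝ, 0 < F ν → ν < ν' → F ν < F ν') ∧
      (∃! ν : ℝ, F ν = 1) := by
  have hβ0 : (0:ℝ) < β := lt_of_lt_of_le one_pos hβ
  have hβne : β ≠ 0 := ne_of_gt hβ0
  subst hF
  set g : Y → ℝ → ℝ := fun y ν => max 0 ((f y + ν) / β + 1) with hg
  have hg0 : ∀ y ν, 0 ≤ g y ν := fun y ν => le_max_left _ _
  have hgmono : ∀ y, Monotone (g y) := by
    intro y ν ν' h
    exact max_le_max le_rfl (by gcongr)
  have hcont : Continuous fun ν => ∑ y, (g y ν) ^ β := by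
    apply continuous_finset_sum
    intro y _
    have h1 : Continuous (g y) := continuous_const.max (by continuity)
    exact h1.rpow_const (fun x => Or.inr hβ0.le)
  have hmono : Monotone fun ν => ∑ y, (g y ν) ^ β := by
    intro ν ν' h
    apply Finset.sum_le_sum
    intro y _
    exact Real.rpow_le_rpow (hg0 y ν) (hgmono y h) hβ0.le
  have hstrict : ∀ ν ν' : ℝ, 0 < (∑ y, (g y ν) ^ β) → ν < ν' →
      (∑ y, (g y ν) ^ β) < (∑ y, (g y ν') ^ β) := by
    intro ν ν' hpos h
    obtain ⟨y, -, hy⟩ := Finset.exists_ne_zero_of_sum_ne_zero (ne_of_gt hpos)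
    have hgy : 0 < g y ν := by
      rcases (hg0 y ν).lt_or_eq with h' | h'
      · exact h'
      · exact absurd (by rw [← h', Real.zero_rpow hβne]) hy
    have hx : 0 < (f y + ν) / β + 1 := by
      by_contra hc
      push_neg at hc
      have : g y ν = 0 := max_eq_left hc
      exact absurd this (ne_of_gt hgy)
    have hlt : g y ν < g y ν' := by
      have h1 : g y ν = (f y + ν) / β + 1 := max_eq_right hx.le
      have h2 : (f y + ν) / β + 1 < (f y + ν') / β + 1 := by gcongr
      calc g y ν = (f y + ν) / β + 1 := h1
        _ < (f y + ν') / β + 1 := h2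
        _ ≤ g y ν' := le_max_right _ _
    apply Finset.sum_lt_sum
    · intro i _
      exact Real.rpow_le_rpow (hg0 i ν) (hgmono i h.le) hβ0.le
    · exact ⟨y, Finset.mem_univ y, Real.rpow_lt_rpow (hg0 y ν) hlt hβ0⟩
  refine ⟨hcont, hmono, hstrict, ?_⟩
  -- existence
  set a : ℝ := -(Finset.univ.sup' Finset.univ_nonempty f) - β with ha
  have hFa : (∑ y, (g y a) ^ β) = 0 := by
    apply Finset.sum_eq_zero
    intro y _
    have h1 : f y ≤ Finset.univ.sup' Finset.univ_nonempty f :=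
      Finset.le_sup' f (Finset.mem_univ y)
    have h2 : (f y + a) / β + 1 ≤ 0 := by
      have h3 : (f y + a) / β ≤ -1 := by
        rw [div_le_iff₀ hβ0]; rw [ha]; linarith
      linarith
    have : g y a = 0 := max_eq_left h2
    rw [this, Real.zero_rpow hβne]
  obtain ⟨y0⟩ := (inferInstance : Nonempty Y)
  set b : ℝ := max a (-(f y0)) with hb
  have hab : a ≤ b := le_max_left _ _
  have hFb : (1:ℝ) ≤ ∑ y, (g y b) ^ β := by
    have h1 : (1:ℝ) ≤ g y0 b := by
      have : 0 ≤ f y0 + b := by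
        have : -(f y0) ≤ b := le_max_right _ _
        linarith
      have h2 : (1:ℝ) ≤ (f y0 + b) / β + 1 := by
        have := div_nonneg this hβ0.le
        linarith
      exact le_trans h2 (le_max_right _ _)
    have h2 : (1:ℝ) ≤ (g y0 b) ^ β := Real.one_le_rpow h1 hβ0.le
    calc (1:ℝ) ≤ (g y0 b) ^ β := h2
      _ ≤ ∑ y, (g y b) ^ β := Finset.single_le_sum
          (fun i _ => Real.rpow_nonneg (hg0 i b) β) (Finset.mem_univ y0)
  have h1mem : (1:ℝ) ∈ Set.Icc ((∑ y, (g y a) ^ β)) ((∑ y, (g y b) ^ β)) := by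
    constructor
    · rw [hFa]; norm_num
    · exact hFb
  obtain ⟨ν, hνmem, hν⟩ := intermediate_value_Icc hab hcont.continuousOn h1mem
  have hν1 : (∑ y, (g y ν) ^ β) = 1 := hν
  refine ⟨ν, hν, ?_⟩
  intro ν' hν'
  have hν'1 : (∑ y, (g y ν') ^ β) = 1 := hν'
  by_contra hne
  rcases lt_or_gt_of_ne hne with h | h
  · have := hstrict ν' ν (by rw [hν'1]; norm_num) h
    rw [hν1, hν'1] at this; exact lt_irrefl _ this
  · have := hstrict ν ν' (by rw [hν1]; norm_num) h
    rw [hν1, hν'1] at this; exact lt_irrefl _ this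
end

section
/- Fix β ≥ 1, label set Y of size k, margins f : Y → ℝ, and let C_β = β(k^(-1/β) - 1). With F(ν) = ∑_{y∈Y}(max(0,(f(y)+ν)/β+1))^β, setting ν₁ = C_β - max_y f(y) and ν₂ = C_β - min_y f(y), one has F(ν₁) ≤ 1 and F(ν₂) ≥ 1; hence the root ν* of F(ν) = 1 lies in [ν₁, ν₂]. -/
theorem implicit_normalizer_root_interval (Y : Type*) [Fintype Y] [Nonempty Y]
    (k : ℕ) (hk : Fintype.card Y = k)
    (β : ℝ) (hβ : 1 ≤ β) (f : Y → ℝ)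
    (F : ℝ → ℝ) (hF : F = fun ν => ∑ y, (max 0 ((f y + ν) / β + 1)) ^ β)
    (Cβ ν₁ ν₂ : ℝ) (hC : Cβ = β * ((k : ℝ) ^ (-(1 / β)) - 1))
    (hν₁ : ν₁ = Cβ - Finset.univ.sup' Finset.univ_nonempty f)
    (hν₂ : ν₂ = Cβ - Finset.univ.inf' Finset.univ_nonempty f) :
    F ν₁ ≤ 1 ∧ 1 ≤ F ν₂ ∧ ∀ ν : ℝ, F ν = 1 → ν ∈ Set.Icc ν₁ ν₂ := by
  have hβ0 : (0:ℝ) < β := lt_of_lt_of_le one_pos hβ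
  have hβ0' : β ≠ 0 := ne_of_gt hβ0
  have hk1 : 1 ≤ k := by
    have := Fintype.card_pos (α := Y); omega
  have hkpos : (0:ℝ) < (k : ℝ) := by exact_mod_cast hk1
  set M := Finset.univ.sup' Finset.univ_nonempty f with hM
  set m := Finset.univ.inf' Finset.univ_nonempty f with hm
  set g : ℝ := (k:ℝ) ^ (-(1/β)) with hgdef
  have hg : 0 < g := Real.rpow_pos_of_pos hkpos _
  have hgb : g ^ β = 1 / (k:ℝ) := by
    rw [hgdef, ← Real.rpow_mul hkpos.le, show -(1/β) * β = -1 by field_simp,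
      Real.rpow_neg_one, one_div]
  have key : ∀ (c : ℝ) (y : Y), (f y + (Cβ - c))/β + 1 = (f y - c)/β + g := by
    intro c y; rw [hC]; field_simp; ring
  -- per-term upper bound at ν₁
  have hlM : ∀ y : Y, f y ≤ M := fun y => Finset.le_sup' f (Finset.mem_univ y)
  have hml : ∀ y : Y, m ≤ f y := fun y => Finset.inf'_le f (Finset.mem_univ y)
  have sumconst : (∑ _y : Y, (1 / (k:ℝ))) = 1 := by
    rw [Finset.sum_const, Finset.card_univ, hk, nsmul_eq_mul]
    field_simp
  have hterm1 : ∀ y : Y, (max 0 ((f y + ν₁)/β + 1)) ^ β ≤ 1 / (k:ℝ) := by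
    intro y
    have harg : (f y + ν₁)/β + 1 = (f y - M)/β + g := by rw [hν₁]; exact key M y
    have hle : max 0 ((f y + ν₁)/β + 1) ≤ g := by
      rw [harg]
      refine max_le hg.le ?_
      have : (f y - M)/β ≤ 0 := by
        apply div_nonpos_of_nonpos_of_nonneg <;> linarith [hlM y]
      linarith
    calc (max 0 ((f y + ν₁)/β + 1)) ^ β ≤ g ^ β :=
          Real.rpow_le_rpow (le_max_left _ _) hle hβ0.le
      _ = 1 / (k:ℝ) := hgb
  have hterm2 : ∀ y : Y, 1 / (k:ℝ) ≤ (max 0 ((f y + ν₂)/β + 1)) ^ β := by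
    intro y
    have harg : (f y + ν₂)/β + 1 = (f y - m)/β + g := by rw [hν₂]; exact key m y
    have hge : g ≤ max 0 ((f y + ν₂)/β + 1) := by
      rw [harg]
      refine le_max_of_le_right ?_
      have : 0 ≤ (f y - m)/β := div_nonneg (by linarith [hml y]) hβ0.le
      linarith
    calc (1:ℝ) / k = g ^ β := hgb.symm
      _ ≤ _ := Real.rpow_le_rpow hg.le hge hβ0.le
  have hF1 : F ν₁ ≤ 1 := by
    rw [hF]
    calc (∑ y, (max 0 ((f y + ν₁)/β + 1)) ^ β) ≤ ∑ _y : Y, 1/(k:ℝ) :=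
          Finset.sum_le_sum (fun y _ => hterm1 y)
      _ = 1 := sumconst
  have hF2 : 1 ≤ F ν₂ := by
    rw [hF]
    calc (1:ℝ) = ∑ _y : Y, 1/(k:ℝ) := sumconst.symm
      _ ≤ _ := Finset.sum_le_sum (fun y _ => hterm2 y)
  refine ⟨hF1, hF2, ?_⟩
  intro ν hνeq
  constructor
  · by_contra hlt
    push_neg at hlt
    -- ν < ν₁, show F ν < 1
    obtain ⟨y₀, -, hy₀⟩ := Finset.exists_mem_eq_sup' (Finset.univ_nonempty (α := Y)) f
    have hstrict : (max 0 ((f y₀ + ν)/β + 1)) ^ β < 1 / (k:ℝ) := by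
      have harg1 : (f y₀ + ν₁)/β + 1 = g := by
        rw [hν₁, key M y₀, ← hy₀, ← hM]; simp
      have hlt2 : (f y₀ + ν)/β + 1 < g := by
        rw [← harg1]
        have : (f y₀ + ν)/β < (f y₀ + ν₁)/β := by gcongr <;> linarith
        linarith
      rcases le_or_gt ((f y₀ + ν)/β + 1) 0 with h0 | h0
      · rw [max_eq_left h0, Real.zero_rpow hβ0']
        positivity
      · rw [max_eq_right h0.le, ← hgb]
        exact Real.rpow_lt_rpow h0.le hlt2 hβ0
    have hmono : ∀ y : Y, (max 0 ((f y + ν)/β + 1)) ^ β ≤ (max 0 ((f y + ν₁)/β + 1)) ^ β := by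
      intro y
      apply Real.rpow_le_rpow (le_max_left _ _) _ hβ0.le
      apply max_le (le_max_left _ _)
      apply le_max_of_le_right
      have : (f y + ν)/β ≤ (f y + ν₁)/β := by gcongr <;> linarith
      linarith
    have : F ν < 1 := by
      rw [hF]
      calc (∑ y, (max 0 ((f y + ν)/β + 1)) ^ β) < ∑ _y : Y, 1/(k:ℝ) := by
            apply Finset.sum_lt_sum (fun y _ => le_trans (hmono y) (hterm1 y))
            exact ⟨y₀, Finset.mem_univ _, hstrict⟩
        _ = 1 := sumconst
    linarith [hνeq ▸ this]
  · by_contra hlt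
    push_neg at hlt
    -- ν₂ < ν, show 1 < F ν
    have hstrict : ∀ y : Y, 1 / (k:ℝ) < (max 0 ((f y + ν)/β + 1)) ^ β := by
      intro y
      have harg : (f y + ν₂)/β + 1 = (f y - m)/β + g := by rw [hν₂]; exact key m y
      have h2 : g ≤ (f y + ν₂)/β + 1 := by
        rw [harg]
        have : 0 ≤ (f y - m)/β := div_nonneg (by linarith [hml y]) hβ0.le
        linarith
      have h3 : (f y + ν₂)/β + 1 < (f y + ν)/β + 1 := by
        have : (f y + ν₂)/β < (f y + ν)/β := by gcongr <;> linarith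
        linarith
      have h4 : g < (f y + ν)/β + 1 := lt_of_le_of_lt h2 h3
      rw [max_eq_right (le_of_lt (lt_of_le_of_lt hg.le h4)), ← hgb]
      exact Real.rpow_lt_rpow hg.le h4 hβ0
    have : 1 < F ν := by
      rw [hF]
      calc (1:ℝ) = ∑ _y : Y, 1/(k:ℝ) := sumconst.symm
        _ < _ := Finset.sum_lt_sum_of_nonempty Finset.univ_nonempty (fun y _ => hstrict y)
    linarith [hνeq ▸ this]
end

section
/- For β ≥ 1 and each label y in a finite set Y, let f_y : ℝ^m → ℝ be linear (f_y(μ) = ⟨Φ_y, μ⟩). Define φ_β(μ) = sup{ν ∈ ℝ : ∑_{y∈Y}(max(0,(f_y(μ)+ν)/β+1))^β ≤ 1}. Then φ_β is a concave function of μ. -/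
theorem implicit_normalizer_concave (Y : Type*) [Fintype Y] [Nonempty Y]
    (m : ℕ) (β : ℝ) (hβ : 1 ≤ β) (Φ : Y → (Fin m → ℝ))
    (φ : (Fin m → ℝ) → ℝ)
    (hφ : φ = fun μ => sSup {ν : ℝ |
      ∑ y, (max 0 ((∑ i, Φ y i * μ i + ν) / β + 1)) ^ β ≤ 1}) :
    ConcaveOn ℝ Set.univ φ := by
  have hβ0 : (0 : ℝ) < β := lt_of_lt_of_le zero_lt_one hβ
  -- convexity of t ↦ (max 0 t) ^ β
  have hconv : ConvexOn ℝ Set.univ (fun t : ℝ => max 0 t ^ β) := by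
    have himg : (fun t : ℝ => max 0 t) '' Set.univ = Set.Ici 0 := by
      ext x; simp only [Set.image_univ, Set.mem_range, Set.mem_Ici]
      constructor
      · rintro ⟨y, rfl⟩; exact le_max_left _ _
      · intro hx; exact ⟨x, max_eq_right hx⟩
    have hg : ConvexOn ℝ ((fun t : ℝ => max 0 t) '' Set.univ) (fun x : ℝ => x ^ β) := by
      rw [himg]; exact convexOn_rpow hβ
    have hf : ConvexOn ℝ Set.univ (fun t : ℝ => max 0 t) :=
      (convexOn_const 0 convex_univ).sup (convexOn_id convex_univ)
    have hmono : MonotoneOn (fun x : ℝ => x ^ β) ((fun t : ℝ => max 0 t) '' Set.univ) := by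
      rw [himg]; intro x hx y _ hxy
      exact Real.rpow_le_rpow hx hxy hβ0.le
    exact hg.comp hf hmono
  have hkey : ∀ a b x y : ℝ, 0 ≤ a → 0 ≤ b → a + b = 1 →
      max 0 ((a * x + b * y) / β + 1) ^ β
        ≤ a * max 0 (x / β + 1) ^ β + b * max 0 (y / β + 1) ^ β := by
    intro a b x y ha hb hab
    have h := hconv.2 (Set.mem_univ (x / β + 1)) (Set.mem_univ (y / β + 1)) ha hb hab
    have harg : a • (x / β + 1) + b • (y / β + 1) = (a * x + b * y) / β + 1 := by
      simp only [smul_eq_mul]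
      field_simp
      ring_nf
      nlinarith [hab]
    rw [harg] at h
    simpa using h
  set S : (Fin m → ℝ) → Set ℝ := fun μ =>
    {ν : ℝ | ∑ y, (max 0 ((∑ i, Φ y i * μ i + ν) / β + 1)) ^ β ≤ 1} with hS
  -- each S μ is nonempty
  have hne : ∀ μ, (S μ).Nonempty := by
    intro μ
    obtain ⟨y₀, -, hM⟩ := Finset.exists_max_image Finset.univ
      (fun y => ∑ i, Φ y i * μ i) Finset.univ_nonempty
    refine ⟨-β - ∑ i, Φ y₀ i * μ i, ?_⟩
    have : ∀ y : Y, (max 0 ((∑ i, Φ y i * μ i + (-β - ∑ i, Φ y₀ i * μ i)) / β + 1)) ^ β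
        = 0 := by
      intro y
      have hy := hM y (Finset.mem_univ y)
      have harg : (∑ i, Φ y i * μ i + (-β - ∑ i, Φ y₀ i * μ i)) / β + 1 ≤ 0 := by
        rw [div_add' _ _ _ (ne_of_gt hβ0)]
        apply div_nonpos_of_nonpos_of_nonneg _ hβ0.le
        linarith
      rw [max_eq_left harg, Real.zero_rpow (ne_of_gt hβ0)]
    simp only [hS, Set.mem_setOf_eq, this, Finset.sum_const_zero]
    norm_num
  -- each S μ is bounded above
  have hbdd : ∀ μ, BddAbove (S μ) := by
    intro μ
    obtain ⟨y₀⟩ := (inferInstance : Nonempty Y)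
    refine ⟨-∑ i, Φ y₀ i * μ i, fun ν hν => ?_⟩
    by_contra hlt
    push_neg at hlt
    have harg : 1 < (∑ i, Φ y₀ i * μ i + ν) / β + 1 := by
      have : 0 < (∑ i, Φ y₀ i * μ i + ν) / β := div_pos (by linarith) hβ0
      linarith
    have h1 : 1 < (max 0 ((∑ i, Φ y₀ i * μ i + ν) / β + 1)) ^ β := by
      rw [max_eq_right (by linarith : (0:ℝ) ≤ _)]
      exact Real.one_lt_rpow_iff_of_pos (by linarith) |>.mpr (Or.inl ⟨harg, hβ0⟩)
    have hterm : (max 0 ((∑ i, Φ y₀ i * μ i + ν) / β + 1)) ^ β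
        ≤ ∑ y, (max 0 ((∑ i, Φ y i * μ i + ν) / β + 1)) ^ β := by
      apply Finset.single_le_sum (f := fun y => (max 0 ((∑ i, Φ y i * μ i + ν) / β + 1)) ^ β)
        (fun y _ => Real.rpow_nonneg (le_max_left _ _) β) (Finset.mem_univ y₀)
    have := hν
    simp only [hS, Set.mem_setOf_eq] at this
    linarith
  -- convex combinations of members
  have hmem : ∀ (μ₁ μ₂ : Fin m → ℝ) (a b : ℝ), 0 ≤ a → 0 ≤ b → a + b = 1 →
      ∀ ν₁ ∈ S μ₁, ∀ ν₂ ∈ S μ₂, a * ν₁ + b * ν₂ ∈ S (a • μ₁ + b • μ₂) := by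
    intro μ₁ μ₂ a b ha hb hab ν₁ h₁ ν₂ h₂
    simp only [hS, Set.mem_setOf_eq] at h₁ h₂ ⊢
    have hsum : ∀ y : Y, ∑ i, Φ y i * (a • μ₁ + b • μ₂) i + (a * ν₁ + b * ν₂)
        = a * (∑ i, Φ y i * μ₁ i + ν₁) + b * (∑ i, Φ y i * μ₂ i + ν₂) := by
      intro y
      have hterm : ∀ i, Φ y i * (a • μ₁ + b • μ₂) i
          = a * (Φ y i * μ₁ i) + b * (Φ y i * μ₂ i) := fun i => by
        simp only [Pi.add_apply, Pi.smul_apply, smul_eq_mul]; ring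
      simp only [hterm, Finset.sum_add_distrib, ← Finset.mul_sum]
      ring
    calc ∑ y, (max 0 ((∑ i, Φ y i * (a • μ₁ + b • μ₂) i + (a * ν₁ + b * ν₂)) / β + 1)) ^ β
        ≤ ∑ y, (a * (max 0 ((∑ i, Φ y i * μ₁ i + ν₁) / β + 1)) ^ β
            + b * (max 0 ((∑ i, Φ y i * μ₂ i + ν₂) / β + 1)) ^ β) := by
          apply Finset.sum_le_sum
          intro y _
          rw [hsum y]
          exact hkey a b _ _ ha hb hab
      _ = a * (∑ y, (max 0 ((∑ i, Φ y i * μ₁ i + ν₁) / β + 1)) ^ β)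
            + b * (∑ y, (max 0 ((∑ i, Φ y i * μ₂ i + ν₂) / β + 1)) ^ β) := by
          rw [Finset.sum_add_distrib, Finset.mul_sum, Finset.mul_sum]
      _ ≤ a * 1 + b * 1 := by
          gcongr
      _ = 1 := by linarith
  refine ⟨convex_univ, fun μ₁ _ μ₂ _ a b ha hb hab => ?_⟩
  subst hφ
  simp only [smul_eq_mul]
  rcases eq_or_lt_of_le ha with rfl | ha'
  · simp only [zero_add] at hab; subst hab; simp
  rcases eq_or_lt_of_le hb with rfl | hb'
  · simp only [add_zero] at hab; subst hab; simp
  -- main estimate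
  have hfin : ∀ ν₁ ∈ S μ₁, ∀ ν₂ ∈ S μ₂,
      a * ν₁ + b * ν₂ ≤ sSup (S (a • μ₁ + b • μ₂)) := fun ν₁ h₁ ν₂ h₂ =>
    le_csSup (hbdd _) (hmem μ₁ μ₂ a b ha hb hab ν₁ h₁ ν₂ h₂)
  have h2 : ∀ ν₁ ∈ S μ₁, b * sSup (S μ₂) ≤ sSup (S (a • μ₁ + b • μ₂)) - a * ν₁ := by
    intro ν₁ h₁
    rw [← le_div_iff₀' hb']
    apply csSup_le (hne μ₂)
    intro ν₂ h₂
    rw [le_div_iff₀' hb']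
    linarith [hfin ν₁ h₁ ν₂ h₂]
  have h1 : a * sSup (S μ₁) ≤ sSup (S (a • μ₁ + b • μ₂)) - b * sSup (S μ₂) := by
    rw [← le_div_iff₀' ha']
    apply csSup_le (hne μ₁)
    intro ν₁ h₁
    rw [le_div_iff₀' ha']
    linarith [h2 ν₁ h₁]
  linarith
end

section
/- For fixed margins f : Y → ℝ, the link function h_y = (max(0, (f(y) + φ_β)/β + 1))^β, where φ_β solves ∑_y(max(0,(f(y)+φ_β)/β+1))^β = 1, converges pointwise as β → ∞ to the softmax: h_y → e^{f(y)} / ∑_{j∈Y} e^{f(j)}. -/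
/-!
The link `h_β(a) = (max 0 (a/β + 1))^β` is monotone in `a` and tends to `exp a` along any `a_β → a`,
as `(1 + a/β)^β → e^a`. So for each `t` the normalization sum `∑ y, h_β(f y + t)` tends to the
strictly increasing `∑ y, exp (f y + t)`; monotonicity forces the roots `φ β` to converge to the
root `-log ∑ j, exp (f j)` of the limiting equation, and then `h_β(f y + φ β)` tends to the softmax.
-/

open Filter Real Topology

theorem tendsto_of_monotone_of_apply_eq {ι α β : Type*} {l : Filter ι}
    [LinearOrder α] [TopologicalSpace α] [OrderTopology α]
    [LinearOrder β] [TopologicalSpace β] [OrderTopology β]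
    {G : ι → α → β} {F : α → β} {x : ι → α} {c : α}
    (hG : ∀ᶠ i in l, Monotone (G i)) (hlim : ∀ t, Tendsto (fun i ↦ G i t) l (𝓝 (F t)))
    (hF : StrictMono F) (hx : ∀ᶠ i in l, G i (x i) = F c) :
    Tendsto x l (𝓝 c) := by
  refine tendsto_order.2 ⟨fun t ht ↦ ?_, fun t ht ↦ ?_⟩
  · filter_upwards [(hlim t).eventually (gt_mem_nhds (hF ht)), hG, hx] with i hlt hmono heq
    by_contra! hle
    exact (heq ▸ hmono hle).not_gt hlt
  · filter_upwards [(hlim t).eventually (lt_mem_nhds (hF ht)), hG, hx] with i hlt hmono heq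
    by_contra! hle
    exact (heq ▸ hmono hle).not_gt hlt

noncomputable def link (β a : ℝ) : ℝ := (max 0 (a / β + 1)) ^ β

theorem monotone_link {β : ℝ} (hβ : 0 ≤ β) : Monotone (link β) := fun _ _ hab ↦ by
  unfold link
  gcongr

theorem tendsto_link_of_tendsto {a : ℝ → ℝ} {t : ℝ} (ha : Tendsto a atTop (𝓝 t)) :
    Tendsto (fun β ↦ link β (a β)) atTop (𝓝 (exp t)) := by
  have hpow : Tendsto (fun β ↦ (1 + a β / β) ^ β) atTop (𝓝 (exp t)) := by
    refine tendsto_one_add_rpow_exp_of_tendsto (ha.congr' ?_)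
    filter_upwards [eventually_ne_atTop 0] with β hβ
    rw [mul_div_cancel₀ _ hβ]
  refine hpow.congr' ?_
  have hdiv : Tendsto (fun β ↦ a β / β) atTop (𝓝 0) := ha.div_atTop tendsto_id
  filter_upwards [hdiv.eventually (lt_mem_nhds neg_one_lt_zero)] with β hβ
  rw [link, max_eq_right (by linarith), add_comm]

theorem link_tendsto_softmax (Y : Type*) [Fintype Y] [Nonempty Y] (f : Y → ℝ)
    (φ : ℝ → ℝ)
    (hφ : ∀ β : ℝ, 1 ≤ β → ∑ y, (max 0 ((f y + φ β) / β + 1)) ^ β = 1) :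
    ∀ y : Y, Tendsto (fun β : ℝ => (max 0 ((f y + φ β) / β + 1)) ^ β) atTop
      (nhds (Real.exp (f y) / ∑ j, Real.exp (f j))) := by
  intro y
  set S := ∑ j, exp (f j)
  have hS : 0 < S := Finset.sum_pos (fun j _ ↦ exp_pos _) Finset.univ_nonempty
  have hexp (z : Y) : exp (f z + -log S) = exp (f z) / S := by
    rw [exp_add, exp_neg, exp_log hS, div_eq_mul_inv]
  have hsoftmax : ∑ z, exp (f z + -log S) = 1 := by
    rw [Finset.sum_congr rfl fun z _ ↦ hexp z, ← Finset.sum_div, div_self hS.ne']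
  have hφlim : Tendsto φ atTop (𝓝 (-log S)) := by
    refine tendsto_of_monotone_of_apply_eq (G := fun β t ↦ ∑ z, link β (f z + t))
      (F := fun t ↦ ∑ z, exp (f z + t)) ?_ ?_ ?_ ?_
    · filter_upwards [eventually_ge_atTop 0] with β hβ
      exact fun s t hst ↦ Finset.sum_le_sum fun z _ ↦ monotone_link hβ (add_le_add_right hst _)
    · exact fun t ↦ tendsto_finsetSum _ fun z _ ↦ tendsto_link_of_tendsto tendsto_const_nhds
    · exact fun s t hst ↦ Finset.sum_lt_sum_of_nonempty Finset.univ_nonempty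
        fun z _ ↦ exp_lt_exp.2 (add_lt_add_right hst _)
    · filter_upwards [eventually_ge_atTop 1] with β hβ
      exact (hφ β hβ).trans hsoftmax.symm
  exact hexp y ▸ tendsto_link_of_tendsto (tendsto_const_nhds.add hφlim)
end

section
/- Let β ≥ 1, Y finite, and for each y let Φ_y ∈ ℝ^m with f_y(μ) = ⟨Φ_y, μ⟩. Define φ_β(μ) implicitly by ∑_y(max(0,(f_y(μ)+φ_β(μ))/β+1))^β = 1, and assume at μ all terms (f_y(μ)+φ_β(μ))/β + 1 are positive. Then φ_β is differentiable at μ with gradient ∇φ_β(μ) = -∑_y p_y Φ_y, where p_y = ((f_y(μ)+φ_β(μ))/β+1)^(β-1) / ∑_j ((f_j(μ)+φ_β(μ))/β+1)^(β-1). -/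
/-!
For each `x`, `ν ↦ F(x, ν)` is nondecreasing and strictly increasing wherever it is positive, so
`φ x` is the only root of `F(x, ·) = 1`. Near `(μ, φ μ)` every term of `F` is positive, so `F` is
strictly differentiable there with `∂F/∂ν = ∑_y ((⟨Φ_y, μ⟩ + φ μ)/β + 1)^(β-1) > 0`. The implicit
function theorem gives a differentiable local solution, which by uniqueness is `φ` itself, and
`∇φ = -(∂F/∂ν)⁻¹ ∂F/∂μ`; the weights of `∂F/∂μ` normalised by `∂F/∂ν` are the `p_y`.
-/

open Filter Topology ContinuousLinearMap

theorem HasStrictFDerivAt.hasStrictFDerivAt_implicit {𝕜 E : Type*} [NontriviallyNormedField 𝕜]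
    [CompleteSpace 𝕜] [NormedAddCommGroup E] [NormedSpace 𝕜 E] [CompleteSpace E]
    {F : E × 𝕜 → 𝕜} {F' : E × 𝕜 →L[𝕜] 𝕜} {φ : E → 𝕜} {x₀ : E} {c : 𝕜}
    (hF : HasStrictFDerivAt F F' (x₀, φ x₀)) (hF' : F' (0, 1) ≠ 0)
    (hφ : ∀ x, F (x, φ x) = c) (huniq : ∀ x t, F (x, t) = c → t = φ x) :
    HasStrictFDerivAt φ (-(F' (0, 1))⁻¹ • F' ∘L .inl 𝕜 E 𝕜) x₀ := by
  set A := F' ∘L .inr 𝕜 E 𝕜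
  have hA₁ : A ∘L ((F' (0, 1))⁻¹ • .id 𝕜 𝕜) = .id 𝕜 𝕜 := by
    ext; simp [A, hF']
  have hA₂ : ((F' (0, 1))⁻¹ • .id 𝕜 𝕜) ∘L A = .id 𝕜 𝕜 := by
    ext; simp [A, hF']
  have hA : A.IsInvertible := .of_inverse hA₁ hA₂
  have hψφ : hF.implicitFunctionOfProdDomain hA =ᶠ[𝓝 x₀] φ := by
    filter_upwards [hF.eventually_apply_implicitFunctionOfProdDomain hA] with x hx
    exact huniq x _ (hx.trans (hφ x₀))
  have hφ' := (hF.hasStrictFDerivAt_implicitFunctionOfProdDomain hA).congr_of_eventuallyEq hψφ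
  have hD : -A.inverse ∘L F' ∘L .inl 𝕜 E 𝕜 = -(F' (0, 1))⁻¹ • F' ∘L .inl 𝕜 E 𝕜 := by
    rw [inverse_eq hA₁ hA₂]
    ext; simp
  rwa [hD] at hφ'

theorem hasStrictDerivAt_max_zero_rpow {s : ℝ} (β : ℝ) (hs : 0 < s) :
    HasStrictDerivAt (fun t => max 0 t ^ β) (β * s ^ (β - 1)) s := by
  refine (Real.hasStrictDerivAt_rpow_const (Or.inl hs.ne')).congr_of_eventuallyEq ?_
  filter_upwards [eventually_gt_nhds hs] with t ht
  rw [max_eq_right ht.le]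

section totalMass

variable {Y E : Type*} [Fintype Y] [NormedAddCommGroup E] [NormedSpace ℝ E]

/-- The paper's `F(μ, ν)`, with `⟨Φ_y, ·⟩` generalised to a continuous linear functional `ℓ y`. -/
noncomputable def totalMass (β : ℝ) (ℓ : Y → E →L[ℝ] ℝ) (z : E × ℝ) : ℝ :=
  ∑ y, max 0 ((ℓ y z.1 + z.2) / β + 1) ^ β

variable {β : ℝ} {ℓ : Y → E →L[ℝ] ℝ}

theorem hasStrictFDerivAt_totalMass (hβ : β ≠ 0) {z : E × ℝ}
    (hpos : ∀ y, 0 < (ℓ y z.1 + z.2) / β + 1) :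
    HasStrictFDerivAt (totalMass β ℓ)
      (∑ y, ((ℓ y z.1 + z.2) / β + 1) ^ (β - 1) • ((ℓ y).comp (fst ℝ E ℝ) + snd ℝ E ℝ)) z := by
  refine HasStrictFDerivAt.fun_sum fun y _ => ?_
  set L := (ℓ y).comp (fst ℝ E ℝ) + snd ℝ E ℝ
  have hlevel : HasStrictFDerivAt (fun w : E × ℝ => (ℓ y w.1 + w.2) / β + 1) (β⁻¹ • L) z :=
    ((L.hasStrictFDerivAt.const_smul β⁻¹).add_const 1).congr_of_eventuallyEq <|
      .of_forall fun w => by simp [L, div_eq_inv_mul]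
  refine ((hasStrictDerivAt_max_zero_rpow β (hpos y)).comp_hasStrictFDerivAt z hlevel
    ).congr_fderiv ?_
  rw [smul_smul, mul_right_comm, mul_inv_cancel₀ hβ, one_mul]

theorem totalMass_lt_of_lt (hβ : 0 < β) (x : E) {s t : ℝ} (hst : s < t)
    (hs : 0 < totalMass β ℓ (x, s)) : totalMass β ℓ (x, s) < totalMass β ℓ (x, t) := by
  have hlevel : ∀ y, (ℓ y x + s) / β + 1 < (ℓ y x + t) / β + 1 := fun y => by gcongr
  obtain ⟨y, -, hy⟩ := Finset.exists_lt_of_sum_lt (s := .univ) (f := fun _ => 0)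
    (g := fun y => max 0 ((ℓ y x + s) / β + 1) ^ β) (by simpa [totalMass] using hs)
  have hy : 0 < (ℓ y x + s) / β + 1 := by
    have : max 0 ((ℓ y x + s) / β + 1) ≠ 0 := fun h => by
      simp [h, Real.zero_rpow hβ.ne'] at hy
    simpa [lt_max_iff] using (le_max_left _ _).lt_of_ne' this
  refine Finset.sum_lt_sum (fun y _ => ?_) ⟨y, Finset.mem_univ y, ?_⟩
  · exact Real.rpow_le_rpow (le_max_left _ _) (max_le_max le_rfl (hlevel y).le) hβ.le
  · simp only [max_eq_right hy.le, max_eq_right (hy.trans (hlevel y)).le]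
    exact Real.rpow_lt_rpow hy.le (hlevel y) hβ

theorem eq_of_totalMass_eq (hβ : 0 < β) (x : E) {s t : ℝ}
    (h : totalMass β ℓ (x, s) = totalMass β ℓ (x, t)) (hs : 0 < totalMass β ℓ (x, s)) :
    s = t := by
  rcases lt_trichotomy s t with hst | rfl | hts
  · exact absurd h (totalMass_lt_of_lt hβ x hst hs).ne
  · rfl
  · exact absurd h (totalMass_lt_of_lt hβ x hts (h ▸ hs)).ne'

end totalMass

theorem implicit_gradient (Y : Type*) [Fintype Y] [Nonempty Y]
    (m : ℕ) (β : ℝ) (hβ : 1 ≤ β) (Φ : Y → (Fin m → ℝ))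
    (φ : (Fin m → ℝ) → ℝ)
    (hφ : ∀ μ' : Fin m → ℝ,
      ∑ y, (max 0 ((∑ i, Φ y i * μ' i + φ μ') / β + 1)) ^ β = 1)
    (μ : Fin m → ℝ)
    (hpos : ∀ y, 0 < (∑ i, Φ y i * μ i + φ μ) / β + 1)
    (p : Y → ℝ)
    (hp : ∀ y, p y = ((∑ i, Φ y i * μ i + φ μ) / β + 1) ^ (β - 1) /
      ∑ j, ((∑ i, Φ j i * μ i + φ μ) / β + 1) ^ (β - 1)) :
    DifferentiableAt ℝ φ μ ∧
      ∀ v : Fin m → ℝ, fderiv ℝ φ μ v = -∑ y, p y * ∑ i, Φ y i * v i := by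
  have hβ₀ : 0 < β := zero_lt_one.trans_le hβ
  set ℓ : Y → (Fin m → ℝ) →L[ℝ] ℝ := fun y => ∑ i, Φ y i • proj i
  have hℓ : ∀ y x, ℓ y x = ∑ i, Φ y i * x i := by simp [ℓ]
  have hmass : ∀ x, totalMass β ℓ (x, φ x) = 1 := by simpa [totalMass, hℓ] using hφ
  have hF := hasStrictFDerivAt_totalMass (ℓ := ℓ) (z := (μ, φ μ)) hβ₀.ne'
    (by simpa [hℓ] using hpos)
  have hnorm : 0 < ∑ y, ((∑ i, Φ y i * μ i + φ μ) / β + 1) ^ (β - 1) :=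
    Finset.sum_pos (fun y _ => Real.rpow_pos_of_pos (hpos y) _) Finset.univ_nonempty
  have hφ' := hF.hasStrictFDerivAt_implicit (by simpa [hℓ] using hnorm.ne') hmass
    fun x t ht => eq_of_totalMass_eq hβ₀ x (ht.trans (hmass x).symm) (by simp [ht])
  refine ⟨hφ'.differentiableAt, fun v => ?_⟩
  rw [hφ'.hasFDerivAt.fderiv]
  simp [hp, hℓ, Finset.mul_sum, div_eq_inv_mul, mul_assoc]
end
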